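/- For every functor G : C ⥤ D, the category of instances of G is equivalent to the functor category Coll(K_G) ⥤ Type, where K_G is the profunctor from C to D defined by K_G(c,d) = Hom_D(G.obj c, d) with actions given by composition in D, and Coll(K_G) is its collage. -/

import Mathlib

/-!
A functor out of the collage of a profunctor `K` amounts to functors `X` on `C` and `Y` on `D`
together with actions `K(c, d) → (X c ⟶ Y d)` compatible with both actions on `K`. For
`K = K_G` every `k ∈ K_G(c, d) = (G c ⟶ d)` is `𝟙 (G c)` followed by `k` acting on the right, so
by Yoneda the action is determined by the images `φ_c : X c ⟶ Y (G c)` of the identities, and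
these form exactly a natural transformation `X ⟶ G ⋙ Y`.
-/

open CategoryTheory Opposite

universe u

variable {C D : Type u} [Category.{u} C] [Category.{u} D]

/-- The objects of the collage of a profunctor `K` from `C` to `D`: the disjoint union of the
objects of `C` and of `D`. -/
def Collage (K : Cᵒᵖ × D ⥤ Type u) : Type u := C ⊕ D

/-- The hom-sets of the collage of `K`. -/
def CollageHom (K : Cᵒᵖ × D ⥤ Type u) : Collage K → Collage K → Type u
  | Sum.inl c, Sum.inl c' => c ⟶ c'
  | Sum.inl c, Sum.inr d => K.obj (op c, d)
  | Sum.inr _, Sum.inl _ => PEmpty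
  | Sum.inr d, Sum.inr d' => d ⟶ d'

/-- Identities in the collage. -/
def collageId (K : Cᵒᵖ × D ⥤ Type u) : ∀ x : Collage K, CollageHom K x x
  | Sum.inl c => (𝟙 c : c ⟶ c)
  | Sum.inr d => (𝟙 d : d ⟶ d)

/-- Composition in the collage, given by composition in `C` and `D` and the two-sided action
of `C` and `D` on `K`. -/
def collageComp (K : Cᵒᵖ × D ⥤ Type u) :
    ∀ {x y z : Collage K}, CollageHom K x y → CollageHom K y z → CollageHom K x z
  | Sum.inl _, Sum.inl _, Sum.inl _, f, g => (f ≫ g : _ ⟶ _)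
  | Sum.inl c, Sum.inl c', Sum.inr d, f, k =>
      (K.map ((Quiver.Hom.op (f : c ⟶ c'), 𝟙 d) : (op c', d) ⟶ (op c, d)) k : K.obj (op c, d))
  | Sum.inl c, Sum.inr d, Sum.inr d', k, g =>
      (K.map ((𝟙 (op c), (g : d ⟶ d')) : (op c, d) ⟶ (op c, d')) k : K.obj (op c, d'))
  | Sum.inl _, Sum.inr _, Sum.inl _, _, g => (g : PEmpty).elim
  | Sum.inr _, Sum.inl _, _, f, _ => (f : PEmpty).elim
  | Sum.inr _, Sum.inr _, Sum.inl _, _, g => (g : PEmpty).elim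
  | Sum.inr _, Sum.inr _, Sum.inr _, f, g => (f ≫ g : _ ⟶ _)

theorem collage_id_comp (K : Cᵒᵖ × D ⥤ Type u) :
    ∀ {x y : Collage K} (f : CollageHom K x y),
      collageComp K (collageId K x) f = f
  | Sum.inl _, Sum.inl _, f => Category.id_comp f
  | Sum.inl c, Sum.inr d, k => K.map_id_apply (op c, d) k
  | Sum.inr _, Sum.inl _, f => (f : PEmpty).elim
  | Sum.inr _, Sum.inr _, f => Category.id_comp f

theorem collage_comp_id (K : Cᵒᵖ × D ⥤ Type u) :
    ∀ {x y : Collage K} (f : CollageHom K x y),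
      collageComp K f (collageId K y) = f
  | Sum.inl _, Sum.inl _, f => Category.comp_id f
  | Sum.inl c, Sum.inr d, k => K.map_id_apply (op c, d) k
  | Sum.inr _, Sum.inl _, f => (f : PEmpty).elim
  | Sum.inr _, Sum.inr _, f => Category.comp_id f

theorem collage_assoc (K : Cᵒᵖ × D ⥤ Type u) :
    ∀ {w x y z : Collage K} (f : CollageHom K w x) (g : CollageHom K x y)
      (h : CollageHom K y z),
      collageComp K (collageComp K f g) h = collageComp K f (collageComp K g h)
  | Sum.inl _, Sum.inl _, Sum.inl _, Sum.inl _, f, g, h => Category.assoc f g h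
  | Sum.inl c₁, Sum.inl c₂, Sum.inl c₃, Sum.inr d, f, g, k => by
      show K.map ((Quiver.Hom.op ((f : c₁ ⟶ c₂) ≫ (g : c₂ ⟶ c₃)), 𝟙 d) :
            (op c₃, d) ⟶ (op c₁, d)) k =
        K.map ((Quiver.Hom.op (f : c₁ ⟶ c₂), 𝟙 d) : (op c₂, d) ⟶ (op c₁, d))
          (K.map ((Quiver.Hom.op (g : c₂ ⟶ c₃), 𝟙 d) : (op c₃, d) ⟶ (op c₂, d)) k)
      refine (congrArg (fun φ : (op c₃, d) ⟶ (op c₁, d) => K.map φ k) ?_).trans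
        (K.map_comp_apply _ _ k)
      apply Prod.ext
      · exact op_comp
      · exact (Category.comp_id _).symm
  | Sum.inl _, Sum.inl _, Sum.inr _, Sum.inl _, _, _, h => (h : PEmpty).elim
  | Sum.inl c₁, Sum.inl c₂, Sum.inr d₁, Sum.inr d₂, f, k, g => by
      show K.map ((𝟙 (op c₁), (g : d₁ ⟶ d₂)) : (op c₁, d₁) ⟶ (op c₁, d₂))
          (K.map ((Quiver.Hom.op (f : c₁ ⟶ c₂), 𝟙 d₁) : (op c₂, d₁) ⟶ (op c₁, d₁)) k) =
        K.map ((Quiver.Hom.op (f : c₁ ⟶ c₂), 𝟙 d₂) : (op c₂, d₂) ⟶ (op c₁, d₂))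
          (K.map ((𝟙 (op c₂), (g : d₁ ⟶ d₂)) : (op c₂, d₁) ⟶ (op c₂, d₂)) k)
      refine (K.map_comp_apply _ _ k).symm.trans
        ((congrArg (fun φ : (op c₂, d₁) ⟶ (op c₁, d₂) => K.map φ k) ?_).trans
          (K.map_comp_apply _ _ k))
      apply Prod.ext
      · simp
      · exact (Category.id_comp _).trans (Category.comp_id _).symm
  | Sum.inl _, Sum.inr _, Sum.inl _, _, _, g, _ => (g : PEmpty).elim
  | Sum.inl _, Sum.inr _, Sum.inr _, Sum.inl _, _, _, h => (h : PEmpty).elim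
  | Sum.inl c, Sum.inr d₁, Sum.inr d₂, Sum.inr d₃, k, g, h => by
      show K.map ((𝟙 (op c), (h : d₂ ⟶ d₃)) : (op c, d₂) ⟶ (op c, d₃))
          (K.map ((𝟙 (op c), (g : d₁ ⟶ d₂)) : (op c, d₁) ⟶ (op c, d₂)) k) =
        K.map ((𝟙 (op c), (g : d₁ ⟶ d₂) ≫ (h : d₂ ⟶ d₃)) : (op c, d₁) ⟶ (op c, d₃)) k
      refine (K.map_comp_apply _ _ k).symm.trans
        (congrArg (fun φ : (op c, d₁) ⟶ (op c, d₃) => K.map φ k) ?_)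
      apply Prod.ext
      · exact Category.id_comp _
      · rfl
  | Sum.inr _, Sum.inl _, _, _, f, _, _ => (f : PEmpty).elim
  | Sum.inr _, Sum.inr _, Sum.inl _, _, _, g, _ => (g : PEmpty).elim
  | Sum.inr _, Sum.inr _, Sum.inr _, Sum.inl _, _, _, h => (h : PEmpty).elim
  | Sum.inr _, Sum.inr _, Sum.inr _, Sum.inr _, f, g, h => Category.assoc f g h

/-- The collage of a profunctor `K` from `C` to `D`. -/
instance collageCategory (K : Cᵒᵖ × D ⥤ Type u) : Category.{u} (Collage K) where
  Hom x y := CollageHom K x y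
  id x := collageId K x
  comp f g := collageComp K f g
  id_comp f := collage_id_comp K f
  comp_id f := collage_comp_id K f
  assoc f g h := collage_assoc K f g h

/-- An instance of a functor `G : C ⥤ D`: copresheaves `X` on `C` and `Y` on `D` together with
a natural transformation `X ⟶ G ⋙ Y`. -/
structure FunctorInstance {C D : Type u} [Category.{u} C] [Category.{u} D] (G : C ⥤ D) where
  X : C ⥤ Type u
  Y : D ⥤ Type u
  φ : X ⟶ G ⋙ Y

/-- The category of instances of a functor `G`. -/
instance {C D : Type u} [Category.{u} C] [Category.{u} D] (G : C ⥤ D) :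
    Category (FunctorInstance G) where
  Hom I J := { μν : (I.X ⟶ J.X) × (I.Y ⟶ J.Y) //
      I.φ ≫ Functor.whiskerLeft G μν.2 = μν.1 ≫ J.φ }
  id I := ⟨(𝟙 I.X, 𝟙 I.Y), by simp⟩
  comp {I J L} f g := ⟨(f.1.1 ≫ g.1.1, f.1.2 ≫ g.1.2), by
    rw [Functor.whiskerLeft_comp, ← Category.assoc, f.2, Category.assoc, g.2, ← Category.assoc]⟩
  id_comp f := rfl
  comp_id f := rfl
  assoc f g h := rfl

/-- The hom profunctor `K_G(c, d) = Hom_D(G.obj c, d)` associated to a functor `G : C ⥤ D`,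
with actions given by composition in `D`. -/
def homProfunctor {C D : Type u} [Category.{u} C] [Category.{u} D] (G : C ⥤ D) :
    Cᵒᵖ × D ⥤ Type u :=
  G.op.prod (𝟭 D) ⋙ Functor.hom D

namespace Collage

section

variable (K : Cᵒᵖ × D ⥤ Type u)

def inl : C ⥤ Collage K where
  obj := Sum.inl
  map f := f

def inr : D ⥤ Collage K where
  obj := Sum.inr
  map g := g

def homOfElem {c : C} {d : D} (k : K.obj (op c, d)) : (inl K).obj c ⟶ (inr K).obj d := k

variable {K} {E : Type*} [Category E]

def lift (F₁ : C ⥤ E) (F₂ : D ⥤ E)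
    (act : ∀ {c : C} {d : D}, K.obj (op c, d) → (F₁.obj c ⟶ F₂.obj d))
    (act_left : ∀ {c c' : C} {d : D} (f : c ⟶ c') (k : K.obj (op c', d)),
      act (K.map (f.op, 𝟙 d) k) = F₁.map f ≫ act k)
    (act_right : ∀ {c : C} {d d' : D} (k : K.obj (op c, d)) (g : d ⟶ d'),
      act (K.map (𝟙 (op c), g) k) = act k ≫ F₂.map g) :
    Collage K ⥤ E where
  obj
    | Sum.inl c => F₁.obj c
    | Sum.inr d => F₂.obj d
  map {x y} f := match x, y, f with
    | Sum.inl _, Sum.inl _, f => F₁.map f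
    | Sum.inl _, Sum.inr _, k => act k
    | Sum.inr _, Sum.inl _, f => (f : PEmpty).elim
    | Sum.inr _, Sum.inr _, g => F₂.map g
  map_id
    | Sum.inl c => F₁.map_id c
    | Sum.inr d => F₂.map_id d
  map_comp {x y z} f g := match x, y, z, f, g with
    | Sum.inl _, Sum.inl _, Sum.inl _, f, g => F₁.map_comp f g
    | Sum.inl _, Sum.inl _, Sum.inr _, f, k => act_left f k
    | Sum.inl _, Sum.inr _, Sum.inl _, _, g => (g : PEmpty).elim
    | Sum.inl _, Sum.inr _, Sum.inr _, k, g => act_right k g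
    | Sum.inr _, Sum.inl _, _, f, _ => (f : PEmpty).elim
    | Sum.inr _, Sum.inr _, Sum.inl _, _, g => (g : PEmpty).elim
    | Sum.inr _, Sum.inr _, Sum.inr _, f, g => F₂.map_comp f g

def natTransMk {F F' : Collage K ⥤ E} (α : inl K ⋙ F ⟶ inl K ⋙ F')
    (β : inr K ⋙ F ⟶ inr K ⋙ F')
    (h : ∀ {c : C} {d : D} (k : K.obj (op c, d)),
      F.map (homOfElem K k) ≫ β.app d = α.app c ≫ F'.map (homOfElem K k)) :
    F ⟶ F' where
  app
    | Sum.inl c => α.app c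
    | Sum.inr d => β.app d
  naturality {x y} f := match x, y, f with
    | Sum.inl _, Sum.inl _, f => α.naturality f
    | Sum.inl _, Sum.inr _, k => h k
    | Sum.inr _, Sum.inl _, f => (f : PEmpty).elim
    | Sum.inr _, Sum.inr _, g => β.naturality g

def natIsoMk {F F' : Collage K ⥤ E} (α : inl K ⋙ F ≅ inl K ⋙ F')
    (β : inr K ⋙ F ≅ inr K ⋙ F')
    (h : ∀ {c : C} {d : D} (k : K.obj (op c, d)),
      F.map (homOfElem K k) ≫ β.hom.app d = α.hom.app c ≫ F'.map (homOfElem K k)) :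
    F ≅ F' :=
  NatIso.ofComponents
    (fun | Sum.inl c => α.app c | Sum.inr d => β.app d)
    (fun {x y} f => by cases x <;> cases y <;> exact (natTransMk α.hom β.hom h).naturality f)

theorem natTrans_ext {F F' : Collage K ⥤ E} {η η' : F ⟶ F'}
    (hl : Functor.whiskerLeft (inl K) η = Functor.whiskerLeft (inl K) η')
    (hr : Functor.whiskerLeft (inr K) η = Functor.whiskerLeft (inr K) η') : η = η' := by
  ext (c | d)
  · exact NatTrans.congr_app hl c
  · exact NatTrans.congr_app hr d

end

variable (G : C ⥤ D)

def unit : inl (homProfunctor G) ⟶ G ⋙ inr (homProfunctor G) where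
  app c := homOfElem _ (c := c) (d := G.obj c) (𝟙 (G.obj c))
  naturality c c' f := by
    change (G.map f ≫ 𝟙 _ ≫ 𝟙 _ : G.obj c ⟶ G.obj c') = G.map (𝟙 c) ≫ 𝟙 _ ≫ G.map f
    simp

theorem homOfElem_eq_unit_comp {c : C} {d : D} (k : G.obj c ⟶ d) :
    homOfElem _ (c := c) (d := d) k = (unit G).app c ≫ (inr _).map k := by
  change k = G.map (𝟙 c) ≫ 𝟙 _ ≫ k
  simp

end Collage

namespace FunctorInstance

variable {G : C ⥤ D}

def isoMk {I J : FunctorInstance G} (e : I.X ≅ J.X) (e' : I.Y ≅ J.Y)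
    (w : I.φ ≫ Functor.whiskerLeft G e'.hom = e.hom ≫ J.φ) : I ≅ J where
  hom := ⟨(e.hom, e'.hom), w⟩
  inv := ⟨(e.inv, e'.inv), by
    rw [Iso.eq_inv_comp, ← Category.assoc, ← w, Category.assoc, ← Functor.whiskerLeft_comp,
      e'.hom_inv_id, Functor.whiskerLeft_id', Category.comp_id]⟩
  hom_inv_id := Subtype.ext (Prod.ext e.hom_inv_id e'.hom_inv_id)
  inv_hom_id := Subtype.ext (Prod.ext e.inv_hom_id e'.inv_hom_id)

def toCollageFunctor (I : FunctorInstance G) : Collage (homProfunctor G) ⥤ Type u :=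
  Collage.lift I.X I.Y (fun {c d} (k : G.obj c ⟶ d) => I.φ.app c ≫ I.Y.map k)
    (fun {c c' d} f (k : G.obj c' ⟶ d) => by
      change I.φ.app c ≫ I.Y.map (G.map f ≫ k ≫ 𝟙 d) = _
      simp [I.φ.naturality_assoc])
    (fun {c d d'} (k : G.obj c ⟶ d) g => by
      change I.φ.app c ≫ I.Y.map (G.map (𝟙 c) ≫ k ≫ g) = _
      simp)

def ofCollageFunctor (P : Collage (homProfunctor G) ⥤ Type u) : FunctorInstance G where
  X := Collage.inl _ ⋙ P
  Y := Collage.inr _ ⋙ P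
  φ := Functor.whiskerRight (Collage.unit G) P

variable (G)

def toCollage : FunctorInstance G ⥤ (Collage (homProfunctor G) ⥤ Type u) where
  obj := toCollageFunctor
  map {I J} η := Collage.natTransMk η.1.1 η.1.2 (fun {c d} (k : G.obj c ⟶ d) => by
    have hc := NatTrans.congr_app η.2 c
    change (I.φ.app c ≫ I.Y.map k) ≫ η.1.2.app d = η.1.1.app c ≫ J.φ.app c ≫ J.Y.map k
    simp only [NatTrans.comp_app, Functor.whiskerLeft_app] at hc
    rw [Category.assoc, η.1.2.naturality, ← Category.assoc, hc, Category.assoc])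
  map_id _ := Collage.natTrans_ext rfl rfl
  map_comp _ _ := Collage.natTrans_ext rfl rfl

def ofCollage : (Collage (homProfunctor G) ⥤ Type u) ⥤ FunctorInstance G where
  obj := ofCollageFunctor
  map {P Q} η := ⟨(Functor.whiskerLeft _ η, Functor.whiskerLeft _ η), by
    ext c : 2
    exact η.naturality ((Collage.unit G).app c)⟩

def unitIso : 𝟭 (FunctorInstance G) ≅ toCollage G ⋙ ofCollage G :=
  NatIso.ofComponents
    (fun I => isoMk (Iso.refl _) (Iso.refl _) (by
      ext c : 2
      change I.φ.app c ≫ 𝟙 _ = 𝟙 _ ≫ I.φ.app c ≫ I.Y.map (𝟙 _)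
      simp))
    (fun _ => Subtype.ext rfl)

def counitIso : ofCollage G ⋙ toCollage G ≅ 𝟭 (Collage (homProfunctor G) ⥤ Type u) :=
  NatIso.ofComponents
    (fun P => Collage.natIsoMk (Iso.refl _) (Iso.refl _) (fun {c d} (k : G.obj c ⟶ d) => by
      change (P.map ((Collage.unit G).app c) ≫ P.map ((Collage.inr _).map k)) ≫ 𝟙 _ =
        𝟙 _ ≫ P.map (Collage.homOfElem _ k)
      rw [Collage.homOfElem_eq_unit_comp, P.map_comp, Category.comp_id, Category.id_comp]))
    (fun _ => Collage.natTrans_ext rfl rfl)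

end FunctorInstance

/-- For every functor `G : C ⥤ D`, the category of instances of `G` is equivalent to the
category of functors from the collage of the profunctor `K_G = Hom_D(G.obj -, -)` to `Type`. -/
theorem functorInstances_equiv_collageFunctors {C D : Type u} [Category.{u} C]
    [Category.{u} D] (G : C ⥤ D) :
    Nonempty (FunctorInstance G ≌ (Collage (homProfunctor G) ⥤ Type u)) :=
  ⟨.mk (FunctorInstance.toCollage G) (FunctorInstance.ofCollage G)
    (FunctorInstance.unitIso G) (FunctorInstance.counitIso G)⟩
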